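/- For any projections π, ρ ∈ M, any unitary v ∈ M, and any x ∈ M with 0 ≤ x ≤ 1, the following product formulas hold in N = M₂(M): p(xπ,v,π)·p(xρ,v,ρ) = p(xπρ,v,πρ), and p(xπ,v,π)·p((1−x)ρ,−v,ρ) = 0. In particular, any two projections of the form p(xπ₁,v,π₁) + p((1−x)π₂,−v,π₂) (π₁, π₂ projections in M) commute. -/

import Mathlib

set_option synthInstance.maxHeartbeats 1000000
set_option maxHeartbeats 1000000

/-!
Statement 5: For projections `π, ρ` in `M`, a unitary `v ∈ M` and `0 ≤ x ≤ 1`: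
`p(xπ,v,π)·p(xρ,v,ρ) = p(xπρ,v,πρ)` and `p(xπ,v,π)·p((1−x)ρ,−v,ρ) = 0`;
in particular any two projections of the form `p(xπ₁,v,π₁) + p((1−x)π₂,−v,π₂)` commute.
-/

variable {H : Type*} [NormedAddCommGroup H] [InnerProductSpace ℂ H] [CompleteSpace H]

/-- `p` is an orthogonal projection belonging to the von Neumann algebra `M`. -/
def VonNeumannAlgebra.IsProjectionIn (M : VonNeumannAlgebra H) (p : H →L[ℂ] H) : Prop :=
  p ∈ M ∧ p * p = p ∧ star p = p

/-- `v` is a unitary element of the von Neumann algebra `M`. -/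
def VonNeumannAlgebra.IsUnitaryIn (M : VonNeumannAlgebra H) (v : H →L[ℂ] H) : Prop :=
  v ∈ M ∧ star v * v = 1 ∧ v * star v = 1

/-- The matrix `p(x,v,π)`. -/
noncomputable def pMat (x v π : H →L[ℂ] H) : Matrix (Fin 2) (Fin 2) (H →L[ℂ] H) :=
  !![x, v * CFC.sqrt (x * (π - x));
     star v * CFC.sqrt (x * (π - x)), π - x]

/-! ### Auxiliary lemmas -/

open ContinuousMapZero in
lemma aux_commute_cfcn_real {A : Type*} [NonUnitalCStarAlgebra A]
    (f : ℝ → ℝ) (a b : A) (ha : IsSelfAdjoint a) (h : Commute b a) :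
    Commute b (cfcₙ f a) := by
  refine cfcₙ_cases (fun y => Commute b y) a f (Commute.zero_right b) fun hf hf0 ha' => ?_
  have h0 : ((0 : quasispectrum ℝ a) : ℝ) = 0 := rfl
  have hφ : Continuous (cfcₙHom (R := ℝ) ha') := (cfcₙHom_isClosedEmbedding ha').continuous
  have key : ∀ g : C(quasispectrum ℝ a, ℝ)₀, Commute b (cfcₙHom ha' g) := by
    intro g
    induction g using ContinuousMapZero.induction_on_of_compact with
    | zero => simp
    | id =>
      have hid : (cfcₙHom ha') (ContinuousMapZero.id (quasispectrum ℝ a)) = a := cfcₙHom_id ha'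
      rw [hid]; exact h
    | star_id =>
      have hid : (cfcₙHom ha') (ContinuousMapZero.id (quasispectrum ℝ a)) = a := cfcₙHom_id ha'
      rw [map_star, hid, ha.star_eq]; exact h
    | add f g hf hg => rw [map_add]; exact hf.add_right hg
    | mul f g hf hg => rw [map_mul]; exact hf.mul_right hg
    | smul r f hf => rw [map_smul]; exact hf.smul_right r
    | frequently g hg => exact hg.mem_of_closed <| isClosed_eq (by fun_prop) (by fun_prop)
  exact key _

section Alevel
variable {A : Type*} [CStarAlgebra A] [PartialOrder A] [StarOrderedRing A]

lemma aux_commute_sqrt (a b : A) (ha : 0 ≤ a) (h : Commute b a) : Commute b (CFC.sqrt a) := by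
  rw [CFC.sqrt, cfcₙ_nnreal_eq_real NNReal.sqrt a ha]
  exact aux_commute_cfcn_real _ a b (IsSelfAdjoint.of_nonneg ha) h

lemma aux_sqrt_mul_proj (a π : A) (ha : 0 ≤ a) (hπ2 : π * π = π) (hπs : star π = π)
    (hc : Commute a π) : CFC.sqrt (a * π) = CFC.sqrt a * π := by
  have hcs : Commute π (CFC.sqrt a) := aux_commute_sqrt a π ha hc.symm
  apply CFC.sqrt_unique
  · calc CFC.sqrt a * π * (CFC.sqrt a * π)
        = CFC.sqrt a * (π * CFC.sqrt a) * π := by noncomm_ring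
      _ = CFC.sqrt a * (CFC.sqrt a * π) * π := by rw [hcs.eq]
      _ = (CFC.sqrt a * CFC.sqrt a) * (π * π) := by noncomm_ring
      _ = a * π := by rw [CFC.sqrt_mul_sqrt_self a ha, hπ2]
  · have key : CFC.sqrt a * π = star π * CFC.sqrt a * π := by
      calc CFC.sqrt a * π = CFC.sqrt a * (π * π) := by rw [hπ2]
        _ = π * CFC.sqrt a * π := by rw [hcs.eq]; noncomm_ring
        _ = star π * CFC.sqrt a * π := by rw [hπs]
    rw [key]
    exact star_left_conjugate_nonneg (CFC.sqrt_nonneg a) π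

lemma aux_nonneg (x : A) (hx0 : 0 ≤ x) (hx1 : x ≤ 1) : 0 ≤ x * (1 - x) := by
  have h1 : (0 : A) ≤ 1 - x := sub_nonneg.2 hx1
  have hs : CFC.sqrt x * CFC.sqrt x = x := CFC.sqrt_mul_sqrt_self x hx0
  have hss : star (CFC.sqrt x) = CFC.sqrt x :=
    (IsSelfAdjoint.of_nonneg (CFC.sqrt_nonneg x)).star_eq
  have hc : Commute (1 - x) (CFC.sqrt x) :=
    aux_commute_sqrt x (1 - x) hx0 ((Commute.one_left x).sub_left (Commute.refl x))
  have key : x * (1 - x) = star (CFC.sqrt x) * (1 - x) * CFC.sqrt x := by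
    rw [hss, ← hc.eq, mul_assoc, hs]
    noncomm_ring
  rw [key]
  exact star_left_conjugate_nonneg h1 _

omit [PartialOrder A] [StarOrderedRing A] in
lemma aux_sqrtArg_eq (y π : A) (hπ2 : π * π = π) (hyπ : Commute y π) :
    (y * π) * (π - y * π) = (y * (1 - y)) * π := by
  have hyπ' : π * y = y * π := hyπ.eq.symm
  calc (y*π)*(π - y*π) = y*(π*π) - y*((π*y)*π) := by noncomm_ring
    _ = y*(π*π) - y*((y*π)*π) := by rw [hyπ']
    _ = y*(π*π) - y*(y*(π*π)) := by noncomm_ring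
    _ = y*π - y*(y*π) := by rw [hπ2]
    _ = (y*(1-y))*π := by noncomm_ring

end Alevel

section scalar
variable {R : Type*} [CommRing R]

lemma aux_e00 (x v w t p q : R) (hvw : v * w = 1) (ht : t * t = x * (1 - x)) :
    (x*p)*(x*q) + (v*(t*p))*(w*(t*q)) = x*(p*q) := by
  linear_combination (p*q)*ht + (t*t*p*q)*hvw

lemma aux_e01 (x v t p q : R) :
    (x*p)*(v*(t*q)) + (v*(t*p))*(q - x*q) = v*(t*(p*q)) := by ring

lemma aux_e10 (x w t p q : R) :
    (w*(t*p))*(x*q) + (p - x*p)*(w*(t*q)) = w*(t*(p*q)) := by ring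

lemma aux_e11 (x v w t p q : R) (hwv : w * v = 1) (ht : t * t = x * (1 - x)) :
    (w*(t*p))*(v*(t*q)) + (p - x*p)*(q - x*q) = p*q - x*(p*q) := by
  linear_combination (t*p*(t*q))*hwv + (p*q)*ht

lemma aux_f00 (x v w t p q : R) (hvw : v * w = 1) (ht : t * t = x * (1 - x)) :
    (x*p)*((1-x)*q) + (v*(t*p))*((-w)*(t*q)) = 0 := by
  linear_combination (-(t*t*p*q))*hvw - (p*q)*ht

lemma aux_f01 (x v t p q : R) :
    (x*p)*((-v)*(t*q)) + (v*(t*p))*(q - (1-x)*q) = 0 := by ring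

lemma aux_f10 (x w t p q : R) :
    (w*(t*p))*((1-x)*q) + (p - x*p)*((-w)*(t*q)) = 0 := by ring

lemma aux_f11 (x v w t p q : R) (hwv : w * v = 1) (ht : t * t = x * (1 - x)) :
    (w*(t*p))*((-v)*(t*q)) + (p - x*p)*(q - (1-x)*q) = 0 := by
  linear_combination (-(t*t*p*q))*hwv - (p*q)*ht

end scalar

lemma pMat_eq (y u π : H →L[ℂ] H) (hy0 : 0 ≤ y) (hy1 : y ≤ 1)
    (hπ2 : π * π = π) (hπs : star π = π) (hyπ : Commute y π) :
    pMat (y * π) u π =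
      !![y * π, u * (CFC.sqrt (y * (1 - y)) * π);
         star u * (CFC.sqrt (y * (1 - y)) * π), π - y * π] := by
  have hc : Commute (y * (1 - y)) π := hyπ.mul_left ((Commute.one_left π).sub_left hyπ)
  rw [pMat, aux_sqrtArg_eq y π hπ2 hyπ,
    aux_sqrt_mul_proj _ _ (aux_nonneg y hy0 hy1) hπ2 hπs hc]

lemma pMat_formulas (x v π ρ : H →L[ℂ] H)
    (hx0 : 0 ≤ x) (hx1 : x ≤ 1)
    (hπ2 : π * π = π) (hπs : star π = π) (hρ2 : ρ * ρ = ρ) (hρs : star ρ = ρ)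
    (hvw : v * star v = 1) (hwv : star v * v = 1)
    (hxπ : Commute x π) (hxρ : Commute x ρ) (hπρ : Commute π ρ)
    (hvx : Commute v x) (hvπ : Commute v π) (hvρ : Commute v ρ) :
    (pMat (x * π) v π * pMat (x * ρ) v ρ = pMat (x * (π * ρ)) v (π * ρ)) ∧
    (pMat (x * π) v π * pMat ((1 - x) * ρ) (-v) ρ = 0) := by
  have hx' : star x = x := (IsSelfAdjoint.of_nonneg hx0).star_eq
  have hx0' : (0 : H →L[ℂ] H) ≤ 1 - x := sub_nonneg.2 hx1
  have hx1' : (1 : H →L[ℂ] H) - x ≤ 1 := sub_le_self 1 hx0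
  have hππρ : (π * ρ) * (π * ρ) = π * ρ := by
    calc (π*ρ)*(π*ρ) = π*((ρ*π)*ρ) := by noncomm_ring
      _ = π*((π*ρ)*ρ) := by rw [hπρ.eq]
      _ = (π*π)*(ρ*ρ) := by noncomm_ring
      _ = π*ρ := by rw [hπ2, hρ2]
  have hπρs : star (π * ρ) = π * ρ := by rw [star_mul, hρs, hπs, ← hπρ.eq]
  have hxπρ : Commute x (π * ρ) := hxπ.mul_right hxρ
  have ha0 : (0 : H →L[ℂ] H) ≤ x * (1 - x) := aux_nonneg x hx0 hx1
  have harg2 : ((1 : H →L[ℂ] H) - x) * (1 - (1 - x)) = x * (1 - x) := by noncomm_ring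
  rw [pMat_eq x v π hx0 hx1 hπ2 hπs hxπ,
    pMat_eq x v ρ hx0 hx1 hρ2 hρs hxρ,
    pMat_eq x v (π * ρ) hx0 hx1 hππρ hπρs hxπρ,
    pMat_eq (1 - x) (-v) ρ hx0' hx1' hρ2 hρs ((Commute.one_left ρ).sub_left hxρ),
    harg2, star_neg]
  set t := CFC.sqrt (x * (1 - x)) with htdef
  have hsv_x : Commute (star v) x := by have := hvx.star_star; rwa [hx'] at this
  have hsv_π : Commute (star v) π := by have := hvπ.star_star; rwa [hπs] at this
  have hsv_ρ : Commute (star v) ρ := by have := hvρ.star_star; rwa [hρs] at this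
  have hv_sv : Commute v (star v) := by
    show v * star v = star v * v
    rw [hvw, hwv]
  have htcomm : ∀ b : H →L[ℂ] H, Commute b x → Commute b t := fun b hb =>
    aux_commute_sqrt _ b ha0 (hb.mul_right ((Commute.one_right b).sub_right hb))
  have htx : Commute x t := htcomm x (Commute.refl x)
  have htπ : Commute π t := htcomm π hxπ.symm
  have htρ : Commute ρ t := htcomm ρ hxρ.symm
  have htv : Commute v t := htcomm v hvx
  have htw : Commute (star v) t := htcomm (star v) hsv_x
  set S : Set (H →L[ℂ] H) := {x, π, ρ, v, star v, t} with hSdef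
  have hpair : ∀ a ∈ S, ∀ b ∈ S, a * b = b * a := by
    intro a ha b hb
    simp only [hSdef, Set.mem_insert_iff, Set.mem_singleton_iff] at ha hb
    rcases ha with rfl|rfl|rfl|rfl|rfl|rfl <;> rcases hb with rfl|rfl|rfl|rfl|rfl|rfl <;>
      first
        | rfl
        | exact hxπ.eq | exact hxπ.symm.eq
        | exact hxρ.eq | exact hxρ.symm.eq
        | exact hπρ.eq | exact hπρ.symm.eq
        | exact hvx.eq | exact hvx.symm.eq
        | exact hvπ.eq | exact hvπ.symm.eq
        | exact hvρ.eq | exact hvρ.symm.eq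
        | exact hsv_x.eq | exact hsv_x.symm.eq
        | exact hsv_π.eq | exact hsv_π.symm.eq
        | exact hsv_ρ.eq | exact hsv_ρ.symm.eq
        | exact hv_sv.eq | exact hv_sv.symm.eq
        | exact htx.eq | exact htx.symm.eq
        | exact htπ.eq | exact htπ.symm.eq
        | exact htρ.eq | exact htρ.symm.eq
        | exact htv.eq | exact htv.symm.eq
        | exact htw.eq | exact htw.symm.eq
  letI : CommRing (Subring.closure S) := Subring.closureCommRingOfComm hpair
  let X : Subring.closure S := ⟨x, Subring.subset_closure (by simp [hSdef])⟩
  let P : Subring.closure S := ⟨π, Subring.subset_closure (by simp [hSdef])⟩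
  let Q : Subring.closure S := ⟨ρ, Subring.subset_closure (by simp [hSdef])⟩
  let V : Subring.closure S := ⟨v, Subring.subset_closure (by simp [hSdef])⟩
  let W : Subring.closure S := ⟨star v, Subring.subset_closure (by simp [hSdef])⟩
  let T : Subring.closure S := ⟨t, Subring.subset_closure (by simp [hSdef])⟩
  have hvwK : V * W = 1 := Subtype.val_injective (by push_cast; exact hvw)
  have hwvK : W * V = 1 := Subtype.val_injective (by push_cast; exact hwv)
  have htK : T * T = X * (1 - X) := Subtype.val_injective (by
    push_cast
    exact CFC.sqrt_mul_sqrt_self _ ha0)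
  have E00 := congrArg Subtype.val (aux_e00 X V W T P Q hvwK htK); push_cast at E00
  have E01 := congrArg Subtype.val (aux_e01 X V T P Q); push_cast at E01
  have E10 := congrArg Subtype.val (aux_e10 X W T P Q); push_cast at E10
  have E11 := congrArg Subtype.val (aux_e11 X V W T P Q hwvK htK); push_cast at E11
  have F00 := congrArg Subtype.val (aux_f00 X V W T P Q hvwK htK); push_cast at F00
  have F01 := congrArg Subtype.val (aux_f01 X V T P Q); push_cast at F01
  have F10 := congrArg Subtype.val (aux_f10 X W T P Q); push_cast at F10
  have F11 := congrArg Subtype.val (aux_f11 X V W T P Q hwvK htK); push_cast at F11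
  constructor
  · rw [Matrix.mul_fin_two, E00, E01, E10, E11]
  · rw [Matrix.mul_fin_two, F00, F01, F10, F11]
    refine Matrix.ext fun i j => ?_
    fin_cases i <;> fin_cases j <;> simp

theorem pMat_product_formulas
    (M : VonNeumannAlgebra H)
    (hcomm : ∀ a ∈ M, ∀ b ∈ M, a * b = b * a)
    (v x : H →L[ℂ] H)
    (hv : M.IsUnitaryIn v)
    (hxM : x ∈ M) (hx0 : 0 ≤ x) (hx1 : x ≤ 1) :
    (∀ π ρ : H →L[ℂ] H, M.IsProjectionIn π → M.IsProjectionIn ρ →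
      pMat (x * π) v π * pMat (x * ρ) v ρ = pMat (x * (π * ρ)) v (π * ρ)) ∧
    (∀ π ρ : H →L[ℂ] H, M.IsProjectionIn π → M.IsProjectionIn ρ →
      pMat (x * π) v π * pMat ((1 - x) * ρ) (-v) ρ = 0) ∧
    (∀ π₁ π₂ ρ₁ ρ₂ : H →L[ℂ] H,
      M.IsProjectionIn π₁ → M.IsProjectionIn π₂ →
      M.IsProjectionIn ρ₁ → M.IsProjectionIn ρ₂ →
      (pMat (x * π₁) v π₁ + pMat ((1 - x) * π₂) (-v) π₂) *
        (pMat (x * ρ₁) v ρ₁ + pMat ((1 - x) * ρ₂) (-v) ρ₂) =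
      (pMat (x * ρ₁) v ρ₁ + pMat ((1 - x) * ρ₂) (-v) ρ₂) *
        (pMat (x * π₁) v π₁ + pMat ((1 - x) * π₂) (-v) π₂)) := by
  obtain ⟨hvM, hwv, hvw⟩ := hv
  -- helper to get all the hypotheses of pMat_formulas for a given x', v'
  have main : ∀ (y u : H →L[ℂ] H), 0 ≤ y → y ≤ 1 →
      (∀ b ∈ M, Commute y b) → (∀ b ∈ M, Commute u b) → Commute u y →
      u * star u = 1 → star u * u = 1 →
      ∀ π ρ : H →L[ℂ] H, M.IsProjectionIn π → M.IsProjectionIn ρ →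
        (pMat (y * π) u π * pMat (y * ρ) u ρ = pMat (y * (π * ρ)) u (π * ρ)) ∧
        (pMat (y * π) u π * pMat ((1 - y) * ρ) (-u) ρ = 0) := by
    intro y u hy0 hy1 hyc huc huy huw hwu π ρ hπ hρ
    exact pMat_formulas y u π ρ hy0 hy1 hπ.2.1 hπ.2.2 hρ.2.1 hρ.2.2 huw hwu
      (hyc π hπ.1) (hyc ρ hρ.1) (hcomm π hπ.1 ρ hρ.1)
      huy (huc π hπ.1) (huc ρ hρ.1)
  have hxc : ∀ b ∈ M, Commute x b := fun b hb => hcomm x hxM b hb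
  have hvc : ∀ b ∈ M, Commute v b := fun b hb => hcomm v hvM b hb
  have hx0' : (0 : H →L[ℂ] H) ≤ 1 - x := sub_nonneg.2 hx1
  have hx1' : (1 : H →L[ℂ] H) - x ≤ 1 := sub_le_self 1 hx0
  have hxc' : ∀ b ∈ M, Commute (1 - x) b := fun b hb =>
    ((Commute.one_left b).sub_left (hxc b hb))
  have hvc' : ∀ b ∈ M, Commute (-v) b := fun b hb => (hvc b hb).neg_left
  have hvy' : Commute (-v) (1 - x) := ((Commute.one_right v).sub_right (hvc x hxM)).neg_left
  have hvw' : (-v) * star (-v) = 1 := by rw [star_neg, neg_mul_neg]; exact hvw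
  have hwv' : star (-v) * (-v) = 1 := by rw [star_neg, neg_mul_neg]; exact hwv
  refine ⟨fun π ρ hπ hρ => (main x v hx0 hx1 hxc hvc (hvc x hxM) hvw hwv π ρ hπ hρ).1,
    fun π ρ hπ hρ => (main x v hx0 hx1 hxc hvc (hvc x hxM) hvw hwv π ρ hπ hρ).2, ?_⟩
  intro π₁ π₂ ρ₁ ρ₂ hπ₁ hπ₂ hρ₁ hρ₂
  have h11 := (main x v hx0 hx1 hxc hvc (hvc x hxM) hvw hwv π₁ ρ₁ hπ₁ hρ₁).1
  have h11' := (main x v hx0 hx1 hxc hvc (hvc x hxM) hvw hwv ρ₁ π₁ hρ₁ hπ₁).1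
  have h12 := (main x v hx0 hx1 hxc hvc (hvc x hxM) hvw hwv π₁ ρ₂ hπ₁ hρ₂).2
  have h12' := (main x v hx0 hx1 hxc hvc (hvc x hxM) hvw hwv ρ₁ π₂ hρ₁ hπ₂).2
  have h22 := (main (1-x) (-v) hx0' hx1' hxc' hvc' hvy' hvw' hwv' π₂ ρ₂ hπ₂ hρ₂).1
  have h22' := (main (1-x) (-v) hx0' hx1' hxc' hvc' hvy' hvw' hwv' ρ₂ π₂ hρ₂ hπ₂).1
  have h21 := (main (1-x) (-v) hx0' hx1' hxc' hvc' hvy' hvw' hwv' π₂ ρ₁ hπ₂ hρ₁).2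
  have h21' := (main (1-x) (-v) hx0' hx1' hxc' hvc' hvy' hvw' hwv' ρ₂ π₁ hρ₂ hπ₁).2
  rw [sub_sub_cancel, neg_neg] at h21 h21'
  have hcomm12 : π₁ * ρ₁ = ρ₁ * π₁ := hcomm π₁ hπ₁.1 ρ₁ hρ₁.1
  have hcomm22 : π₂ * ρ₂ = ρ₂ * π₂ := hcomm π₂ hπ₂.1 ρ₂ hρ₂.1
  rw [add_mul, mul_add, mul_add, add_mul, mul_add, mul_add,
    h11, h11', h12, h12', h21, h21', h22, h22', hcomm12, hcomm22]
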